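/- (All solutions of the planar rotation FDE vanish simultaneously) Let α ∈ (0,1) and let z* ∈ ℂ be a zero of the complex Mittag-Leffler function E_α, i.e. E_α(z*) = 0 (necessarily z* ∉ ℝ and z* ≠ 0). Let φ := arg(z*) ∈ (−π, π], let A be the 2×2 real matrix with rows (cos φ, sin φ) and (−sin φ, cos φ), and let T := |z*|^(1/α) > 0. Then every continuous function x : [0,∞) → ℝ² satisfying the Volterra integral equation x(t) = x(0) + (1/Γ(α)) ∫_0^t (t-τ)^(α-1) A x(τ) dτ for all t ≥ 0 satisfies x(T) = (0,0). -/

import Mathlib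

/-!
Identify `ℝ²` with `ℂ` via `v ↦ v₀ + v₁ i`. The matrix `A` then acts as multiplication by
`c = cos φ - i sin φ`, so `z = x₀ + i x₁` solves the scalar Volterra equation
`z = z(0) + I^α (c z)`, with `I^α` the Riemann–Liouville integral. Because
`I^α τ^β = Γ(β+1)/Γ(α+β+1) t^(α+β)`, Picard iteration produces the partial sums of
`E_α(c t^α) z(0)`, with error at most `M ‖c‖ⁿ t^(αn) / Γ(αn+1)` where `M` bounds `‖z‖` on
`[0, t]`; this tends to `0` since `Γ` outgrows every exponential. Hence
`z(t) = E_α(c t^α) z(0)`, and `c T^α = conj z*` gives `z(T) = conj (E_α(z*)) z(0) = 0`.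
-/

open Real Set intervalIntegral

/-- The complex Mittag-Leffler function `E_α(z) = ∑_{k=0}^∞ z^k / Γ(αk + 1)`, `z ∈ ℂ`. -/
noncomputable def mittagLefflerC (α : ℝ) (z : ℂ) : ℂ :=
  ∑' k : ℕ, z ^ k / Complex.Gamma ((α : ℂ) * k + 1)

open Filter Topology ComplexConjugate

namespace Real

section

open scoped Nat

theorem exists_pos_mul_factorial_floor_le_Gamma_add_one :
    ∃ c > 0, ∀ x : ℝ, 0 ≤ x → c * (⌊x⌋₊)! ≤ Gamma (x + 1) := by
  obtain ⟨x₀, hx₀, hmin⟩ := exists_isMinOn_Gamma_Ioi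
  have hc : 0 < Gamma x₀ := Gamma_pos_of_pos (by linarith [hx₀.1])
  have hc1 : Gamma x₀ ≤ 1 := Gamma_one ▸ hmin (mem_Ioi.mpr one_pos)
  refine ⟨Gamma x₀, hc, fun x hx => ?_⟩
  rcases lt_or_ge x 1 with hx1 | hx1
  · rw [Nat.floor_eq_zero.mpr hx1, Nat.factorial_zero, Nat.cast_one, mul_one]
    exact hmin (show x + 1 ∈ Ioi 0 by simp only [mem_Ioi]; linarith)
  · have hn : (1 : ℝ) ≤ ⌊x⌋₊ := by exact_mod_cast Nat.one_le_floor_iff x |>.mpr hx1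
    calc Gamma x₀ * (⌊x⌋₊)! ≤ (⌊x⌋₊)! := mul_le_of_le_one_left (by positivity) hc1
      _ = Gamma (⌊x⌋₊ + 1) := (Gamma_nat_eq_factorial _).symm
      _ ≤ Gamma (x + 1) :=
        Gamma_strictMonoOn_Ici.monotoneOn (by simp only [mem_Ici]; linarith)
          (by simp only [mem_Ici]; linarith) (by linarith [Nat.floor_le hx])

theorem exists_rpow_le_mul_Gamma_add_one {ρ : ℝ} (hρ : 0 ≤ ρ) :
    ∃ C, ∀ x : ℝ, 0 ≤ x → ρ ^ x ≤ C * Gamma (x + 1) := by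
  obtain ⟨c, hc, hΓ⟩ := exists_pos_mul_factorial_floor_le_Gamma_add_one
  set R := max ρ 1
  refine ⟨R * exp R / c, fun x hx => ?_⟩
  set n := ⌊x⌋₊
  have hR : 1 ≤ R := le_max_right ρ 1
  calc ρ ^ x ≤ R ^ x := rpow_le_rpow hρ (le_max_left ρ 1) hx
    _ ≤ R ^ ((n + 1 : ℕ) : ℝ) :=
        rpow_le_rpow_of_exponent_le hR (by push_cast; exact (Nat.lt_floor_add_one x).le)
    _ = R * R ^ n := by rw [rpow_natCast, pow_succ']
    _ ≤ R * (exp R * n !) := by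
        gcongr
        exact (div_le_iff₀ (by positivity)).mp (pow_div_factorial_le_exp R (by positivity) n)
    _ ≤ R * exp R / c * Gamma (x + 1) := by
        rw [div_mul_eq_mul_div, le_div_iff₀ hc, mul_assoc, mul_assoc, mul_assoc, mul_comm (n ! : ℝ)]
        gcongr
        exact hΓ x hx

theorem summable_pow_div_Gamma_mul_add_one {α r : ℝ} (hα : 0 < α) (hr : 0 ≤ r) :
    Summable fun k : ℕ => r ^ k / Gamma (α * k + 1) := by
  obtain ⟨C, hC⟩ := exists_rpow_le_mul_Gamma_add_one (ρ := (r + 1) ^ (1 / α)) (by positivity)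
  refine (summable_geometric_of_lt_one (by positivity)
    ((div_lt_one (by linarith)).mpr (lt_add_one r))).mul_left C |>.of_nonneg_of_le
      (fun k => div_nonneg (pow_nonneg hr k) (Gamma_pos_of_pos (by positivity)).le) fun k => ?_
  have hΓ : 0 < Gamma (α * k + 1) := Gamma_pos_of_pos (by positivity)
  have hgrowth : (r + 1) ^ k ≤ C * Gamma (α * k + 1) := by
    have := hC (α * k) (by positivity)
    rwa [← rpow_mul (by positivity), one_div, inv_mul_cancel_left₀ hα.ne', rpow_natCast] at this
  calc r ^ k / Gamma (α * k + 1) = (r / (r + 1)) ^ k * ((r + 1) ^ k / Gamma (α * k + 1)) := by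
        rw [div_pow]; field_simp
    _ ≤ (r / (r + 1)) ^ k * C := by
        gcongr
        exact (div_le_iff₀ hΓ).mpr hgrowth
    _ = C * (r / (r + 1)) ^ k := mul_comm _ _

end

end Real

theorem Complex.Gamma_ofReal_mul_natCast_add_one (α : ℝ) (k : ℕ) :
    Complex.Gamma ((α : ℂ) * k + 1) = (Real.Gamma (α * k + 1) : ℂ) := by
  rw [← Complex.Gamma_ofReal]; push_cast; rfl

theorem mittagLefflerC_zero (α : ℝ) : mittagLefflerC α 0 = 1 := by
  rw [mittagLefflerC, tsum_eq_single 0 fun k hk => by simp [zero_pow hk]]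
  simp

theorem mittagLefflerC_conj (α : ℝ) (z : ℂ) :
    mittagLefflerC α (conj z) = conj (mittagLefflerC α z) := by
  simp only [mittagLefflerC, Complex.conj_tsum, map_div₀, map_pow,
    Complex.Gamma_ofReal_mul_natCast_add_one, Complex.conj_ofReal]

theorem hasSum_mittagLefflerC {α : ℝ} (hα : 0 < α) (z : ℂ) :
    HasSum (fun k : ℕ => z ^ k / (Gamma (α * k + 1) : ℂ)) (mittagLefflerC α z) := by
  have hnorm (k : ℕ) : ‖z ^ k / (Gamma (α * k + 1) : ℂ)‖ = ‖z‖ ^ k / Gamma (α * k + 1) := by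
    rw [norm_div, norm_pow, Complex.norm_real, norm_of_nonneg (Gamma_pos_of_pos (by positivity)).le]
  have hsum : Summable fun k : ℕ => z ^ k / (Gamma (α * k + 1) : ℂ) := .of_norm <|
    (summable_pow_div_Gamma_mul_add_one hα (norm_nonneg z)).congr fun k => (hnorm k).symm
  simpa only [mittagLefflerC, Complex.Gamma_ofReal_mul_natCast_add_one] using hsum.hasSum

theorem integral_sub_rpow_mul_rpow {a b t : ℝ} (ha : 0 < a) (hb : -1 < b) (ht : 0 < t) :
    ∫ τ in (0 : ℝ)..t, (t - τ) ^ (a - 1) * τ ^ b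
      = Gamma a * Gamma (b + 1) / Gamma (a + b + 1) * t ^ (a + b) := by
  have hΓ : Complex.Gamma ((b + 1 : ℝ) + a : ℝ) ≠ 0 := by
    rw [Complex.Gamma_ofReal]
    exact_mod_cast (Gamma_pos_of_pos (by linarith)).ne'
  have hbeta : Complex.betaIntegral (b + 1 : ℝ) a
      = Complex.Gamma (b + 1 : ℝ) * Complex.Gamma a / Complex.Gamma ((b + 1 : ℝ) + a : ℝ) := by
    rw [eq_div_iff (by exact_mod_cast hΓ), Complex.Gamma_mul_Gamma_eq_betaIntegral
      (by simp; linarith) (by simpa using ha), mul_comm]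
    push_cast; rfl
  have hcomplex : ((∫ τ in (0 : ℝ)..t, (t - τ) ^ (a - 1) * τ ^ b : ℝ) : ℂ)
      = ∫ τ in (0 : ℝ)..t, (τ : ℂ) ^ ((b + 1 : ℝ) - 1 : ℂ) * ((t : ℂ) - τ) ^ ((a : ℂ) - 1) := by
    rw [← intervalIntegral.integral_ofReal]
    refine intervalIntegral.integral_congr fun τ hτ => ?_
    rw [uIcc_of_le ht.le] at hτ
    rw [Complex.ofReal_mul, Complex.ofReal_cpow (by linarith [hτ.2]),
      Complex.ofReal_cpow hτ.1]
    push_cast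
    ring_nf
  rw [Complex.betaIntegral_scaled _ _ ht, hbeta,
    show ((b + 1 : ℝ) : ℂ) + a - 1 = (a + b : ℝ) by push_cast; ring,
    ← Complex.ofReal_cpow ht.le, show b + 1 + a = a + b + 1 by ring] at hcomplex
  simp only [Complex.Gamma_ofReal] at hcomplex
  have hreal : ∫ τ in (0 : ℝ)..t, (t - τ) ^ (a - 1) * τ ^ b
      = t ^ (a + b) * (Gamma (b + 1) * Gamma a / Gamma (a + b + 1)) := mod_cast hcomplex
  rw [hreal]
  ring

section RiemannLiouville

variable {E : Type*} [NormedAddCommGroup E] [NormedSpace ℝ E] {α t : ℝ}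

-- `I^α f (t)`; the integral equation of the theorem is `x t = x 0 + I^α (A x) t`.
noncomputable def riemannLiouvilleIntegral (α : ℝ) (f : ℝ → E) (t : ℝ) : E :=
  (1 / Gamma α) • ∫ τ in (0 : ℝ)..t, (t - τ) ^ (α - 1) • f τ

theorem intervalIntegrable_sub_rpow_smul (hα : 0 < α) {f : ℝ → E}
    (hf : ContinuousOn f (uIcc 0 t)) :
    IntervalIntegrable (fun τ => (t - τ) ^ (α - 1) • f τ) MeasureTheory.volume 0 t := by
  have hkernel := (intervalIntegral.intervalIntegrable_rpow' (a := t) (b := 0)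
    (by linarith : -1 < α - 1)).comp_sub_left t
  simp only [sub_self, sub_zero] at hkernel
  exact hkernel.smul_continuousOn hf

theorem ContinuousLinearMap.map_riemannLiouvilleIntegral [CompleteSpace E] {F : Type*}
    [NormedAddCommGroup F] [NormedSpace ℝ F] [CompleteSpace F] (L : E →L[ℝ] F) (hα : 0 < α)
    {f : ℝ → E} (hf : ContinuousOn f (uIcc 0 t)) :
    L (riemannLiouvilleIntegral α f t) = riemannLiouvilleIntegral α (fun τ => L (f τ)) t := by
  simp only [riemannLiouvilleIntegral, map_smul,
    ← L.intervalIntegral_comp_comm (intervalIntegrable_sub_rpow_smul hα hf)]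

theorem riemannLiouvilleIntegral_const_smul {𝕜 : Type*} [NormedDivisionRing 𝕜] [Module 𝕜 E]
    [NormSMulClass 𝕜 E] [SMulCommClass ℝ 𝕜 E] (c : 𝕜) (f : ℝ → E) :
    riemannLiouvilleIntegral α (fun τ => c • f τ) t = c • riemannLiouvilleIntegral α f t := by
  simp only [riemannLiouvilleIntegral, smul_comm _ c, intervalIntegral.integral_smul]

theorem riemannLiouvilleIntegral_smul_const [CompleteSpace E] {𝕜 : Type*} [RCLike 𝕜]
    [NormedSpace 𝕜 E] [IsScalarTower ℝ 𝕜 E] (g : ℝ → 𝕜) (v : E) :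
    riemannLiouvilleIntegral α (fun τ => g τ • v) t = riemannLiouvilleIntegral α g t • v := by
  simp only [riemannLiouvilleIntegral, ← smul_assoc, intervalIntegral.integral_smul_const]

theorem riemannLiouvilleIntegral_sub [CompleteSpace E] (hα : 0 < α) {f g : ℝ → E}
    (hf : ContinuousOn f (uIcc 0 t)) (hg : ContinuousOn g (uIcc 0 t)) :
    riemannLiouvilleIntegral α (fun τ => f τ - g τ) t
      = riemannLiouvilleIntegral α f t - riemannLiouvilleIntegral α g t := by
  simp only [riemannLiouvilleIntegral, ← smul_sub,
    ← intervalIntegral.integral_sub (intervalIntegrable_sub_rpow_smul hα hf)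
      (intervalIntegrable_sub_rpow_smul hα hg)]

theorem riemannLiouvilleIntegral_finsetSum {ι : Type*} (s : Finset ι) (hα : 0 < α)
    {f : ι → ℝ → E} (hf : ∀ i ∈ s, ContinuousOn (f i) (uIcc 0 t)) :
    riemannLiouvilleIntegral α (fun τ => ∑ i ∈ s, f i τ) t
      = ∑ i ∈ s, riemannLiouvilleIntegral α (f i) t := by
  simp only [riemannLiouvilleIntegral, ← Finset.smul_sum,
    ← intervalIntegral.integral_finsetSum fun i hi => intervalIntegrable_sub_rpow_smul hα (hf i hi)]

theorem riemannLiouvilleIntegral_rpow (hα : 0 < α) {b : ℝ} (hb : 0 ≤ b) (ht : 0 ≤ t) :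
    riemannLiouvilleIntegral α (fun τ => τ ^ b) t
      = Gamma (b + 1) / Gamma (α + b + 1) * t ^ (α + b) := by
  obtain rfl | ht := ht.eq_or_lt
  · simp [riemannLiouvilleIntegral, zero_rpow (by positivity : α + b ≠ 0)]
  · simp only [riemannLiouvilleIntegral, smul_eq_mul]
    rw [integral_sub_rpow_mul_rpow hα (by linarith) ht]
    field_simp [(Gamma_pos_of_pos hα).ne']

theorem norm_riemannLiouvilleIntegral_le (hα : 0 < α) (ht : 0 ≤ t) {f : ℝ → E} {g : ℝ → ℝ}
    (hg : IntervalIntegrable (fun τ => (t - τ) ^ (α - 1) * g τ) MeasureTheory.volume 0 t)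
    (hfg : ∀ τ ∈ Ioc 0 t, ‖f τ‖ ≤ g τ) :
    ‖riemannLiouvilleIntegral α f t‖ ≤ riemannLiouvilleIntegral α g t := by
  have hΓ : 0 < 1 / Gamma α := one_div_pos.mpr (Gamma_pos_of_pos hα)
  rw [riemannLiouvilleIntegral, riemannLiouvilleIntegral, norm_smul, norm_of_nonneg hΓ.le,
    smul_eq_mul]
  refine mul_le_mul_of_nonneg_left (intervalIntegral.norm_integral_le_of_norm_le ht
    (MeasureTheory.ae_of_all _ fun τ hτ => ?_) hg) hΓ.le
  rw [norm_smul, norm_of_nonneg (rpow_nonneg (by linarith [hτ.2]) _)]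
  exact mul_le_mul_of_nonneg_left (hfg τ hτ) (rpow_nonneg (by linarith [hτ.2]) _)

end RiemannLiouville

section Volterra

open Finset

variable {α : ℝ} (c : ℂ)

-- The `n`-th partial sum of `t ↦ E_α(c t^α)`.
noncomputable def mittagLefflerPartialSum (α : ℝ) (c : ℂ) (n : ℕ) (t : ℝ) : ℂ :=
  ∑ k ∈ range n, t ^ (α * k) • (c ^ k / (Gamma (α * k + 1) : ℂ))

theorem continuous_mittagLefflerPartialSum (hα : 0 ≤ α) (n : ℕ) :
    Continuous (mittagLefflerPartialSum α c n) :=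
  continuous_finsetSum _ fun k _ =>
    (continuous_rpow_const (by positivity)).smul continuous_const

theorem mittagLefflerPartialSum_succ (hα : 0 < α) (n : ℕ) {t : ℝ} (ht : 0 ≤ t) :
    mittagLefflerPartialSum α c (n + 1) t
      = 1 + c * riemannLiouvilleIntegral α (mittagLefflerPartialSum α c n) t := by
  have hterm (k : ℕ) : c * riemannLiouvilleIntegral α
      (fun τ => τ ^ (α * k) • (c ^ k / (Gamma (α * k + 1) : ℂ))) t
        = t ^ (α * (k + 1 : ℕ)) • (c ^ (k + 1) / (Gamma (α * (k + 1 : ℕ) + 1) : ℂ)) := by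
    rw [riemannLiouvilleIntegral_smul_const, riemannLiouvilleIntegral_rpow hα (by positivity) ht]
    have hΓ : (Gamma (α * k + 1) : ℂ) ≠ 0 := mod_cast (Gamma_pos_of_pos (by positivity)).ne'
    rw [show α + α * k = α * (k + 1 : ℕ) by push_cast; ring, Complex.real_smul,
      Complex.real_smul]
    push_cast
    field_simp
    ring
  have hS : mittagLefflerPartialSum α c n
      = fun τ => ∑ k ∈ range n, τ ^ (α * k) • (c ^ k / (Gamma (α * k + 1) : ℂ)) := rfl
  rw [mittagLefflerPartialSum, sum_range_succ', hS, riemannLiouvilleIntegral_finsetSum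
    (f := fun (k : ℕ) (τ : ℝ) => τ ^ (α * k) • (c ^ k / (Gamma (α * k + 1) : ℂ))) _ hα
    fun k _ => ((continuous_rpow_const (by positivity)).smul continuous_const).continuousOn,
    mul_sum]
  simp only [hterm]
  rw [add_comm]
  congr 1
  simp

variable {c} {z : ℝ → ℂ}

theorem norm_sub_mul_mittagLefflerPartialSum_le (hα : 0 < α) (hz : ContinuousOn z (Ici 0))
    (hsol : ∀ t ∈ Ici (0 : ℝ), z t = z 0 + riemannLiouvilleIntegral α (fun τ => c • z τ) t)
    {T M : ℝ} (hM : ∀ t ∈ Icc 0 T, ‖z t‖ ≤ M) (n : ℕ) {t : ℝ} (ht : t ∈ Icc 0 T) :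
    ‖z t - z 0 * mittagLefflerPartialSum α c n t‖
      ≤ M * ‖c‖ ^ n / Gamma (α * n + 1) * t ^ (α * n) := by
  induction n generalizing t with
  | zero => simpa [mittagLefflerPartialSum] using hM t ht
  | succ n ih =>
    set S := mittagLefflerPartialSum α c n with hSdef
    have hS : Continuous S := continuous_mittagLefflerPartialSum c hα.le n
    have hzt : ContinuousOn z (uIcc 0 t) := hz.mono (uIcc_of_le ht.1 ▸ Icc_subset_Ici_self)
    have hrec : z t - z 0 * mittagLefflerPartialSum α c (n + 1) t
        = c • riemannLiouvilleIntegral α (fun τ => z τ - z 0 * S τ) t := by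
      have hlin : riemannLiouvilleIntegral α (fun τ => z 0 * S τ) t
          = z 0 * riemannLiouvilleIntegral α S t := riemannLiouvilleIntegral_const_smul (z 0) S
      rw [riemannLiouvilleIntegral_sub (g := fun τ => z 0 * S τ) hα hzt
          (continuous_const.mul hS).continuousOn, hlin, hsol t ht.1,
        mittagLefflerPartialSum_succ c hα n ht.1, ← hSdef,
        riemannLiouvilleIntegral_const_smul, smul_eq_mul, smul_eq_mul]
      ring
    set K := M * ‖c‖ ^ n / Gamma (α * n + 1) with hK
    have hbound : ‖riemannLiouvilleIntegral α (fun τ => z τ - z 0 * S τ) t‖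
        ≤ riemannLiouvilleIntegral α (fun τ => K * τ ^ (α * n)) t :=
      norm_riemannLiouvilleIntegral_le hα ht.1 (intervalIntegrable_sub_rpow_smul hα
          (continuous_const.mul (continuous_rpow_const (by positivity))).continuousOn)
        fun τ hτ => ih ⟨hτ.1.le, hτ.2.trans ht.2⟩
    have hpow : riemannLiouvilleIntegral α (fun τ => K * τ ^ (α * n)) t
        = K * (Gamma (α * n + 1) / Gamma (α + α * n + 1) * t ^ (α + α * n)) :=
      (riemannLiouvilleIntegral_const_smul K _).trans <| by
        rw [smul_eq_mul, riemannLiouvilleIntegral_rpow hα (by positivity) ht.1]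
    have hΓ : Gamma (α * n + 1) ≠ 0 := (Gamma_pos_of_pos (by positivity)).ne'
    calc ‖z t - z 0 * mittagLefflerPartialSum α c (n + 1) t‖
        = ‖c‖ * ‖riemannLiouvilleIntegral α (fun τ => z τ - z 0 * S τ) t‖ := by
          rw [hrec, norm_smul]
      _ ≤ ‖c‖ * (K * (Gamma (α * n + 1) / Gamma (α + α * n + 1) * t ^ (α + α * n))) := by
          rw [← hpow]; gcongr
      _ = M * ‖c‖ ^ (n + 1) / Gamma (α * (n + 1 : ℕ) + 1) * t ^ (α * (n + 1 : ℕ)) := by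
          rw [hK, show α + α * n = α * (n + 1 : ℕ) by push_cast; ring]
          field_simp
          ring

theorem eq_mittagLefflerC_mul_of_volterra (hα : 0 < α) (hz : ContinuousOn z (Ici 0))
    (hsol : ∀ t ∈ Ici (0 : ℝ), z t = z 0 + riemannLiouvilleIntegral α (fun τ => c • z τ) t)
    {t : ℝ} (ht : 0 ≤ t) :
    z t = mittagLefflerC α (c * (t ^ α : ℝ)) * z 0 := by
  obtain ⟨M, hM⟩ := isCompact_Icc.exists_bound_of_continuousOn
    (hz.mono (Icc_subset_Ici_self : Icc 0 t ⊆ Ici 0))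
  have hpartial : Tendsto (fun n => mittagLefflerPartialSum α c n t) atTop
      (𝓝 (mittagLefflerC α (c * (t ^ α : ℝ)))) := by
    refine (hasSum_mittagLefflerC hα _).tendsto_sum_nat.congr fun n =>
      sum_congr rfl fun k _ => ?_
    rw [Complex.real_smul, mul_pow, ← Complex.ofReal_pow, ← rpow_natCast, ← rpow_mul ht]
    ring
  have herror : Tendsto (fun n : ℕ => M * ‖c‖ ^ n / Gamma (α * n + 1) * t ^ (α * n)) atTop
      (𝓝 0) := by
    have h := ((summable_pow_div_Gamma_mul_add_one hα
      (by positivity : 0 ≤ ‖c‖ * t ^ α)).tendsto_atTop_zero).const_mul M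
    rw [mul_zero] at h
    refine h.congr fun n => ?_
    rw [mul_pow, ← rpow_natCast (t ^ α), ← rpow_mul ht]
    ring
  have happrox : Tendsto (fun n => z 0 * mittagLefflerPartialSum α c n t) atTop (𝓝 (z t)) :=
    tendsto_iff_norm_sub_tendsto_zero.mpr <| squeeze_zero (fun n => norm_nonneg _)
      (fun n => norm_sub_rev (z 0 * _) (z t) ▸
        norm_sub_mul_mittagLefflerPartialSum_le hα hz hsol hM n ⟨ht, le_rfl⟩) herror
  rw [mul_comm]
  exact tendsto_nhds_unique happrox (hpartial.const_mul (z 0))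

end Volterra

noncomputable def finTwoToComplex : (Fin 2 → ℝ) ≃L[ℝ] ℂ :=
  Complex.basisOneI.equivFun.symm.toContinuousLinearEquiv

theorem finTwoToComplex_apply (v : Fin 2 → ℝ) :
    finTwoToComplex v = v 0 + v 1 * Complex.I := by
  simp [finTwoToComplex, Module.Basis.equivFun_symm_apply, Fin.sum_univ_two, Complex.real_smul]

theorem finTwoToComplex_mulVec (a b : ℝ) (v : Fin 2 → ℝ) :
    finTwoToComplex ((!![a, b; -b, a]).mulVec v) = (a - b * Complex.I) • finTwoToComplex v := by
  simp only [Matrix.cons_mulVec, dotProduct, Fin.sum_univ_two, Matrix.cons_val_zero,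
    Matrix.cons_val_one, Matrix.cons_val_fin_one, Matrix.empty_mulVec, finTwoToComplex_apply,
    Complex.ofReal_add, Complex.ofReal_mul, Complex.ofReal_neg, smul_eq_mul]
  ring_nf
  rw [Complex.I_sq]
  ring

theorem Complex.norm_mul_cos_sub_sin_mul_I (z : ℂ) :
    (‖z‖ : ℂ) * (Real.cos (arg z) - Real.sin (arg z) * I) = conj z := by
  have h := congrArg conj (Complex.norm_mul_cos_add_sin_mul_I z)
  rw [← Complex.ofReal_cos, ← Complex.ofReal_sin] at h
  simp only [map_mul, map_add, Complex.conj_ofReal, Complex.conj_I] at h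
  rw [← h]
  ring

theorem finTwoToComplex_volterra {α a b : ℝ} (hα : 0 < α) {x : ℝ → Fin 2 → ℝ}
    (hx : ContinuousOn x (Ici 0))
    (hsol : ∀ t ∈ Ici (0 : ℝ), x t = x 0 +
      riemannLiouvilleIntegral α (fun τ => (!![a, b; -b, a]).mulVec (x τ)) t) {t : ℝ}
    (ht : 0 ≤ t) :
    finTwoToComplex (x t) = finTwoToComplex (x 0) +
      riemannLiouvilleIntegral α (fun τ => (a - b * Complex.I) • finTwoToComplex (x τ)) t := by
  have hAx : ContinuousOn (fun τ => (!![a, b; -b, a]).mulVec (x τ)) (uIcc 0 t) :=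
    (continuous_const.matrix_mulVec continuous_id).comp_continuousOn
      (hx.mono (uIcc_of_le ht ▸ Icc_subset_Ici_self))
  rw [hsol t ht, map_add, ← ContinuousLinearEquiv.coe_coe,
    ContinuousLinearMap.map_riemannLiouvilleIntegral _ hα hAx]
  simp only [ContinuousLinearEquiv.coe_coe, finTwoToComplex_mulVec]

/-- All solutions of the planar rotation Caputo FDE vanish simultaneously: if `E_α(z*) = 0`,
`φ = arg z*`, `A = [[cos φ, sin φ], [-sin φ, cos φ]]` and `T = |z*|^(1/α)`, then `T > 0` and
every continuous solution of the associated Volterra integral equation on `[0, ∞)` satisfies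
`x(T) = (0, 0)`. -/
theorem planar_rotation_fde_all_solutions_vanish
    (α : ℝ) (hα : α ∈ Set.Ioo (0 : ℝ) 1)
    (zstar : ℂ) (hzstar : mittagLefflerC α zstar = 0)
    (φ : ℝ) (hφ : φ = Complex.arg zstar)
    (A : Matrix (Fin 2) (Fin 2) ℝ)
    (hA : A = !![Real.cos φ, Real.sin φ; -Real.sin φ, Real.cos φ])
    (T : ℝ) (hT : T = ‖zstar‖ ^ (1 / α)) :
    0 < T ∧
    ∀ x : ℝ → Fin 2 → ℝ, ContinuousOn x (Set.Ici 0) →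
      (∀ t ∈ Set.Ici (0 : ℝ),
        x t = x 0 + (1 / Real.Gamma α) •
          ∫ τ in (0 : ℝ)..t, (t - τ) ^ (α - 1) • A.mulVec (x τ)) →
      x T = ![0, 0] := by
  have hz0 : zstar ≠ 0 := by
    rintro rfl
    simp [mittagLefflerC_zero] at hzstar
  have hT0 : 0 < T := hT ▸ rpow_pos_of_pos (norm_pos_iff.mpr hz0) _
  refine ⟨hT0, fun x hx hsol => ?_⟩
  subst hA
  have hcT : (Real.cos φ - Real.sin φ * Complex.I) * (T ^ α : ℝ) = conj zstar := by
    rw [hT, one_div, rpow_inv_rpow (norm_nonneg _) hα.1.ne', mul_comm, hφ,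
      Complex.norm_mul_cos_sub_sin_mul_I]
  have hz := eq_mittagLefflerC_mul_of_volterra hα.1
    (finTwoToComplex.continuous.comp_continuousOn hx)
    (fun _ ht => finTwoToComplex_volterra hα.1 hx hsol ht) hT0.le
  rw [hcT, mittagLefflerC_conj, hzstar, map_zero, zero_mul] at hz
  exact finTwoToComplex.injective (hz.trans (by simp [finTwoToComplex_apply]))
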